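/- Let π and π' be policies agreeing outside bad sets B_h for all h ∈ [H], and suppose rewards lie in [0,1]. Then the expected cumulative reward of π' from μ₀ is at least that of π minus H times the probability under π that a trajectory visits a bad state: E_{τ∼π'(μ₀)}[Σ_h R(s_h,a_h)] ≥ E_{τ∼π(μ₀)}[Σ_h R(s_h,a_h)] − H·Pr_{τ∼π(μ₀)}[∃h, s_h ∈ B_h]. -/
import Mathlib


attribute [local instance] Classical.propDecidable

/-- Time-indexed value function (expected cumulative reward from time `h`). -/
noncomputable def val {S A : Type} [Fintype S] (R : S → A → ℝ) (P : S → A → S → ℝ)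
    (H : ℕ) (π : ℕ → S → A) : ℕ → S → ℝ
  | h, s =>
    if h < H then
      R s (π h s) + ∑ s' : S, P s (π h s) s' * val R P H π (h + 1) s'
    else 0
termination_by h _ => H - h
decreasing_by omega

/-- Probability that a trajectory of `π` started at `s` at time `h` visits a bad state. -/
noncomputable def badP {S A : Type} [Fintype S] (P : S → A → S → ℝ)
    (H : ℕ) (π : ℕ → S → A) (B : ℕ → Set S) : ℕ → S → ℝ
  | h, s =>
    if h < H then
      if s ∈ B h then 1
      else ∑ s' : S, P s (π h s) s' * badP P H π B (h + 1) s'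
    else 0
termination_by h _ => H - h
decreasing_by omega

section Aux

variable {S A : Type} [Fintype S] (R : S → A → ℝ) (P : S → A → S → ℝ)
  (H : ℕ) (π : ℕ → S → A) (B : ℕ → Set S)

lemma val_nonneg (hR : ∀ s a, 0 ≤ R s a) (hPnonneg : ∀ s a s', 0 ≤ P s a s') :
    ∀ k h s, H ≤ h + k → 0 ≤ val R P H π h s := by
  intro k
  induction k with
  | zero =>
    intro h s hk
    rw [val, if_neg (by omega)]
  | succ n ih =>
    intro h s hk
    rw [val]
    split
    · refine add_nonneg (hR _ _) (Finset.sum_nonneg fun s' _ => ?_)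
      exact mul_nonneg (hPnonneg _ _ _) (ih (h+1) s' (by omega))
    · exact le_refl 0

lemma val_le (hR : ∀ s a, R s a ≤ 1) (hPnonneg : ∀ s a s', 0 ≤ P s a s')
    (hPsum : ∀ s a, ∑ s' : S, P s a s' = 1) :
    ∀ k h s, H ≤ h + k → val R P H π h s ≤ ((H - h : ℕ) : ℝ) := by
  intro k
  induction k with
  | zero =>
    intro h s hk
    rw [val, if_neg (by omega)]
    positivity
  | succ n ih =>
    intro h s hk
    rw [val]
    split
    · rename_i hh
      have h1 : ∑ s' : S, P s (π h s) s' * val R P H π (h+1) s'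
          ≤ ∑ s' : S, P s (π h s) s' * ((H - (h+1) : ℕ) : ℝ) := by
        refine Finset.sum_le_sum fun s' _ => ?_
        exact mul_le_mul_of_nonneg_left (ih (h+1) s' (by omega)) (hPnonneg _ _ _)
      have h2 : ∑ s' : S, P s (π h s) s' * ((H - (h+1) : ℕ) : ℝ)
          = ((H - (h+1) : ℕ) : ℝ) := by
        rw [← Finset.sum_mul, hPsum, one_mul]
      have h3 : ((H - h : ℕ) : ℝ) = 1 + ((H - (h+1) : ℕ) : ℝ) := by
        have : (H - h : ℕ) = 1 + (H - (h+1) : ℕ) := by omega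
        rw [this]; push_cast; ring
      rw [h3]
      exact add_le_add (hR _ _) (h1.trans h2.le)
    · exact Nat.cast_nonneg _

lemma badP_nonneg (hPnonneg : ∀ s a s', 0 ≤ P s a s') :
    ∀ k h s, H ≤ h + k → 0 ≤ badP P H π B h s := by
  intro k
  induction k with
  | zero =>
    intro h s hk
    rw [badP, if_neg (by omega)]
  | succ n ih =>
    intro h s hk
    rw [badP]
    split
    · split
      · exact zero_le_one
      · exact Finset.sum_nonneg fun s' _ =>
          mul_nonneg (hPnonneg _ _ _) (ih (h+1) s' (by omega))
    · exact le_refl 0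

lemma val_diff_le (hR : ∀ s a, 0 ≤ R s a ∧ R s a ≤ 1)
    (hPnonneg : ∀ s a s', 0 ≤ P s a s') (hPsum : ∀ s a, ∑ s' : S, P s a s' = 1)
    (π' : ℕ → S → A)
    (hagree : ∀ h, h < H → ∀ s, s ∉ B h → π h s = π' h s) :
    ∀ k h s, H ≤ h + k →
      val R P H π h s - val R P H π' h s ≤ ((H - h : ℕ) : ℝ) * badP P H π B h s := by
  intro k
  induction k with
  | zero =>
    intro h s hk
    rw [val, val, badP, if_neg (by omega), if_neg (by omega), if_neg (by omega)]
    simp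
  | succ n ih =>
    intro h s hk
    by_cases hh : h < H
    · by_cases hB : s ∈ B h
      · rw [badP, if_pos hh, if_pos hB, mul_one]
        have h1 : val R P H π h s ≤ ((H - h : ℕ) : ℝ) :=
          val_le R P H π (fun s a => (hR s a).2) hPnonneg hPsum (H - h) h s (by omega)
        have h2 : 0 ≤ val R P H π' h s :=
          val_nonneg R P H π' (fun s a => (hR s a).1) hPnonneg (H - h) h s (by omega)
        linarith
      · have hact : π h s = π' h s := hagree h hh s hB
        rw [val, val, badP, if_pos hh, if_pos hh, if_pos hh, if_neg hB, ← hact]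
        have key : ∑ s' : S, P s (π h s) s' * val R P H π (h+1) s'
            - ∑ s' : S, P s (π h s) s' * val R P H π' (h+1) s'
            ≤ ∑ s' : S, P s (π h s) s' *
              (((H - (h+1) : ℕ) : ℝ) * badP P H π B (h+1) s') := by
          rw [← Finset.sum_sub_distrib]
          refine Finset.sum_le_sum fun s' _ => ?_
          rw [← mul_sub]
          exact mul_le_mul_of_nonneg_left (ih (h+1) s' (by omega)) (hPnonneg _ _ _)
        have h4 : ∑ s' : S, P s (π h s) s' *
              (((H - (h+1) : ℕ) : ℝ) * badP P H π B (h+1) s')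
            ≤ ((H - h : ℕ) : ℝ) * ∑ s' : S, P s (π h s) s' * badP P H π B (h+1) s' := by
          rw [Finset.mul_sum]
          refine Finset.sum_le_sum fun s' _ => ?_
          have hb : 0 ≤ badP P H π B (h+1) s' :=
            badP_nonneg P H π B hPnonneg n (h+1) s' (by omega)
          have hc : ((H - (h+1) : ℕ) : ℝ) ≤ ((H - h : ℕ) : ℝ) := by
            have : (H - (h+1) : ℕ) ≤ (H - h : ℕ) := by omega
            exact_mod_cast this
          calc P s (π h s) s' * (((H - (h+1) : ℕ) : ℝ) * badP P H π B (h+1) s')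
              = ((H - (h+1) : ℕ) : ℝ) * (P s (π h s) s' * badP P H π B (h+1) s') := by ring
            _ ≤ ((H - h : ℕ) : ℝ) * (P s (π h s) s' * badP P H π B (h+1) s') := by
                exact mul_le_mul_of_nonneg_right hc (mul_nonneg (hPnonneg _ _ _) hb)
        linarith
    · rw [val, val, badP, if_neg hh, if_neg hh, if_neg hh]
      simp

end Aux

/-- if `π` and `π'` agree outside the bad sets `B h` and rewards lie in
`[0,1]`, then the expected cumulative reward of `π'` from `μ₀` is at least that of `π`
minus `H` times the probability under `π` that a trajectory visits a bad state. -/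
theorem expected_return_ge_of_agree_off_bad {S A : Type} [Fintype S]
    (R : S → A → ℝ) (P : S → A → S → ℝ) (μ0 : S → ℝ)
    (hR : ∀ s a, 0 ≤ R s a ∧ R s a ≤ 1)
    (hμ0 : ∀ s, 0 ≤ μ0 s) (hμ0sum : ∑ s : S, μ0 s = 1)
    (hPnonneg : ∀ s a s', 0 ≤ P s a s') (hPsum : ∀ s a, ∑ s' : S, P s a s' = 1)
    (H : ℕ) (B : ℕ → Set S) (π π' : ℕ → S → A)
    (hagree : ∀ h, h < H → ∀ s, s ∉ B h → π h s = π' h s) :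
    ∑ s : S, μ0 s * val R P H π' 0 s ≥
      ∑ s : S, μ0 s * val R P H π 0 s - H * ∑ s : S, μ0 s * badP P H π B 0 s := by
  have key : ∀ s : S, μ0 s * val R P H π 0 s - μ0 s * val R P H π' 0 s
      ≤ (H : ℝ) * (μ0 s * badP P H π B 0 s) := by
    intro s
    have h1 : val R P H π 0 s - val R P H π' 0 s
        ≤ ((H - 0 : ℕ) : ℝ) * badP P H π B 0 s :=
      val_diff_le R P H π B hR hPnonneg hPsum π' hagree H 0 s (by omega)
    simp only [Nat.sub_zero] at h1
    calc μ0 s * val R P H π 0 s - μ0 s * val R P H π' 0 s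
        = μ0 s * (val R P H π 0 s - val R P H π' 0 s) := by ring
      _ ≤ μ0 s * ((H : ℝ) * badP P H π B 0 s) :=
          mul_le_mul_of_nonneg_left h1 (hμ0 s)
      _ = (H : ℝ) * (μ0 s * badP P H π B 0 s) := by ring
  have h2 : ∑ s : S, (μ0 s * val R P H π 0 s - μ0 s * val R P H π' 0 s)
      ≤ ∑ s : S, (H : ℝ) * (μ0 s * badP P H π B 0 s) :=
    Finset.sum_le_sum fun s _ => key s
  rw [Finset.sum_sub_distrib, ← Finset.mul_sum] at h2
  linarith
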